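/- For d ≥ 2 and γ(k) = sqrt(ω² + 4∑_{j=1}^d λ_j sin²(k_j/2)) with ω, λ_j > 0, at every point k of the torus there exists a multi-index β of order 2 such that ∂^β γ(k) ≠ 0; that is, not all second-order partial derivatives of γ can vanish simultaneously. -/

import Mathlib

/-!
Write `γ = √g` with `g k = ω² + ∑ⱼ 2λⱼ (1 - cos kⱼ)`, a positive separable function. Then
`∂ⱼγ = λⱼ sin kⱼ / γ` and `∂ᵢ∂ⱼγ = δᵢⱼ λⱼ cos kⱼ / γ - λᵢ λⱼ sin kᵢ sin kⱼ / γ³`.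
If `sin kᵢ = 0` for some `i`, then `cos kᵢ = ±1` and the diagonal entry `∂ᵢ²γ` is nonzero;
otherwise every off-diagonal entry is nonzero, and there is one since `d ≥ 2`.
-/

open Real

section Coordinates

variable {ι : Type*} [Fintype ι]

theorem fderiv_comp_apply_apply {ψ : ℝ → ℝ} {x : ι → ℝ} {j : ι} (hψ : DifferentiableAt ℝ ψ (x j))
    (v : ι → ℝ) : fderiv ℝ (fun y : ι → ℝ => ψ (y j)) x v = deriv ψ (x j) * v j := by
  have h : HasFDerivAt (fun y : ι → ℝ => ψ (y j)) _ x := hψ.hasDerivAt.comp_hasFDerivAt x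
    (ContinuousLinearMap.proj (R := ℝ) (φ := fun _ : ι => ℝ) j).hasFDerivAt
  rw [h.fderiv]
  simp [mul_comm]

theorem fderiv_sum_comp_apply_apply {φ : ι → ℝ → ℝ} {x : ι → ℝ}
    (hφ : ∀ j, DifferentiableAt ℝ (φ j) (x j)) (v : ι → ℝ) :
    fderiv ℝ (fun y : ι → ℝ => ∑ j, φ j (y j)) x v = ∑ j, deriv (φ j) (x j) * v j := by
  have h : ∀ j ∈ Finset.univ, DifferentiableAt ℝ (fun y : ι → ℝ => φ j (y j)) x :=
    fun j _ => (hφ j).comp x (differentiableAt_apply j x)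
  rw [fderiv_fun_sum h, sum_apply]
  exact Finset.sum_congr rfl fun j _ => fderiv_comp_apply_apply (hφ j) v

end Coordinates

section Sqrt

variable {E : Type*} [NormedAddCommGroup E] [NormedSpace ℝ E] {g : E → ℝ}

theorem fderiv_sqrt_apply {x : E} (hg : DifferentiableAt ℝ g x) (hx : g x ≠ 0) (v : E) :
    fderiv ℝ (fun y => √(g y)) x v = fderiv ℝ g x v / (2 * √(g x)) := by
  rw [fderiv_sqrt hg hx, smul_apply, smul_eq_mul, one_div_mul_eq_div]

theorem fderiv_fderiv_sqrt_apply (hg : Differentiable ℝ g) (hpos : ∀ x, 0 < g x) {v k : E}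
    (hgv : DifferentiableAt ℝ (fun x => fderiv ℝ g x v) k) (w : E) :
    fderiv ℝ (fun x => fderiv ℝ (fun y => √(g y)) x v) k w =
      fderiv ℝ (fun x => fderiv ℝ g x v) k w / (2 * √(g k)) -
        fderiv ℝ g k v * fderiv ℝ g k w / (4 * g k * √(g k)) := by
  have hquot : (fun x => fderiv ℝ (fun y => √(g y)) x v) =
      fun x => fderiv ℝ g x v * (2 * √(g x))⁻¹ :=
    funext fun x => by rw [fderiv_sqrt_apply (hg x) (hpos x).ne', div_eq_mul_inv]
  have hsqrt : 0 < √(g k) := sqrt_pos.mpr (hpos k)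
  have hden : HasFDerivAt (fun x => (2 * √(g x))⁻¹) _ k :=
    (hasDerivAt_inv (by positivity)).comp_hasFDerivAt k
      (((hg k).hasFDerivAt.sqrt (hpos k).ne').const_mul 2)
  rw [hquot, (hgv.hasFDerivAt.fun_mul hden).fderiv]
  simp only [add_apply, smul_apply, smul_eq_mul]
  field_simp [(hpos k).ne']
  rw [sq_sqrt (hpos k).le]
  ring

end Sqrt

section Dispersion

variable {ι : Type*} [Fintype ι] (ω : ℝ) (lam : ι → ℝ)

noncomputable def dispersionSq (k : ι → ℝ) : ℝ :=
  ω ^ 2 + ∑ j, 2 * lam j * (1 - cos (k j))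

theorem dispersionSq_eq (k : ι → ℝ) :
    dispersionSq ω lam k = ω ^ 2 + 4 * ∑ j, lam j * sin (k j / 2) ^ 2 := by
  rw [dispersionSq, Finset.mul_sum]
  congr 1
  refine Finset.sum_congr rfl fun j _ => ?_
  rw [sin_sq_eq_half_sub, mul_div_cancel₀ _ two_ne_zero]
  ring

variable {ω lam} in
theorem dispersionSq_pos (hω : ω ≠ 0) (hlam : ∀ j, 0 ≤ lam j) (k : ι → ℝ) :
    0 < dispersionSq ω lam k := by
  have hterm (j : ι) : 0 ≤ 2 * lam j * (1 - cos (k j)) :=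
    mul_nonneg (mul_nonneg zero_le_two (hlam j)) (sub_nonneg.mpr (cos_le_one _))
  exact add_pos_of_pos_of_nonneg (by positivity) (Finset.sum_nonneg fun j _ => hterm j)

theorem hasDerivAt_mul_one_sub_cos (c t : ℝ) :
    HasDerivAt (fun t => c * (1 - cos t)) (c * sin t) t := by
  simpa using ((hasDerivAt_cos t).const_sub 1).const_mul c

theorem differentiable_dispersionSq : Differentiable ℝ (dispersionSq ω lam) := by
  unfold dispersionSq
  fun_prop

theorem fderiv_dispersionSq_apply [DecidableEq ι] (x : ι → ℝ) (j : ι) :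
    fderiv ℝ (dispersionSq ω lam) x (Pi.single j 1) = 2 * lam j * sin (x j) := by
  have h := fderiv_sum_comp_apply_apply
    (fun j => (hasDerivAt_mul_one_sub_cos (2 * lam j) (x j)).differentiableAt) (Pi.single j 1)
  have hfun : dispersionSq ω lam = fun y => ω ^ 2 + ∑ j, 2 * lam j * (1 - cos (y j)) := rfl
  rw [hfun, fderiv_const_add, h]
  simp [Pi.single_apply]

theorem fderiv_fderiv_dispersionSq_apply [DecidableEq ι] (k v : ι → ℝ) (j : ι) :
    fderiv ℝ (fun x => fderiv ℝ (dispersionSq ω lam) x (Pi.single j 1)) k v =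
      2 * lam j * cos (k j) * v j := by
  simp only [fderiv_dispersionSq_apply]
  rw [fderiv_comp_apply_apply (ψ := fun t => 2 * lam j * sin t) (by fun_prop)]
  simp

variable {ω lam} in
theorem fderiv_fderiv_sqrt_dispersionSq_apply [DecidableEq ι] (hω : ω ≠ 0)
    (hlam : ∀ j, 0 ≤ lam j) (k : ι → ℝ) (i j : ι) :
    fderiv ℝ (fun x => fderiv ℝ (fun y => √(dispersionSq ω lam y)) x (Pi.single j 1)) k
        (Pi.single i 1) =
      2 * lam j * cos (k j) * (Pi.single i 1 : ι → ℝ) j / (2 * √(dispersionSq ω lam k)) -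
        2 * lam j * sin (k j) * (2 * lam i * sin (k i)) /
          (4 * dispersionSq ω lam k * √(dispersionSq ω lam k)) := by
  have hdiff :
      DifferentiableAt ℝ (fun x => fderiv ℝ (dispersionSq ω lam) x (Pi.single j 1)) k := by
    simp only [fderiv_dispersionSq_apply]
    fun_prop
  rw [fderiv_fderiv_sqrt_apply (differentiable_dispersionSq ω lam) (dispersionSq_pos hω hlam)
    hdiff, fderiv_fderiv_dispersionSq_apply, fderiv_dispersionSq_apply, fderiv_dispersionSq_apply]

end Dispersion

/-- For `d ≥ 2`, at every point `k` there is a multi-index of order 2 (i.e. a pair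
`(i, j)`) such that the corresponding second-order partial derivative of `γ` does
not vanish. -/
theorem gamma_second_derivs_not_all_vanish (d : ℕ) (hd : 2 ≤ d) (ω : ℝ) (hω : 0 < ω)
    (lam : Fin d → ℝ) (hlam : ∀ j, 0 < lam j) (γ : (Fin d → ℝ) → ℝ)
    (hγ : ∀ k, γ k = Real.sqrt (ω ^ 2 + 4 * ∑ j, lam j * Real.sin (k j / 2) ^ 2)) :
    ∀ k : Fin d → ℝ, ∃ i j : Fin d,
      fderiv ℝ (fun x => fderiv ℝ γ x (Pi.single j 1)) k (Pi.single i 1) ≠ 0 := by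
  intro k
  have hγ_eq : γ = fun x => √(dispersionSq ω lam x) :=
    funext fun x => by rw [hγ, dispersionSq_eq]
  have hlam' : ∀ j, 0 ≤ lam j := fun j => (hlam j).le
  have hg : 0 < dispersionSq ω lam k := dispersionSq_pos hω.ne' hlam' k
  rw [hγ_eq]
  simp only [fderiv_fderiv_sqrt_dispersionSq_apply hω.ne' hlam']
  by_cases hsin : ∃ i, sin (k i) = 0
  · obtain ⟨i, hi⟩ := hsin
    have hcos : cos (k i) ≠ 0 := fun hc => by simpa [hi, hc] using sin_sq_add_cos_sq (k i)
    refine ⟨i, i, ?_⟩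
    rw [hi, Pi.single_eq_same, mul_zero, zero_mul, zero_div, sub_zero, mul_one]
    exact div_ne_zero (mul_ne_zero (mul_ne_zero two_ne_zero (hlam i).ne') hcos) (by positivity)
  · push Not at hsin
    obtain ⟨i, j, hij⟩ := (Fin.nontrivial_iff_two_le.mpr hd).exists_pair_ne
    refine ⟨i, j, ?_⟩
    rw [Pi.single_eq_of_ne hij.symm, mul_zero, zero_div, zero_sub, neg_ne_zero]
    exact div_ne_zero (by simp [hsin, (hlam i).ne', (hlam j).ne']) (by positivity)
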